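/- arXiv:1706.08358 — 3 statements merged into one kernel-verified Lean document; each statement's English description precedes it below -/
import Mathlib

section
/- Let A ⊆ H be finite-dimensional k-algebras with common radical I = rad(A) = rad(H), and let B be the algebra of 2×2 'matrices' B = [[A, H],[I, H]] (with matrix multiplication, using the inclusions I ⊆ A ⊆ H). Then L = [[I, H],[I, I]] is a two-sided ideal of B, L is nilpotent, B/L ≅ (A/I) × (H/I) is semisimple, and hence L is the Jacobson radical of B. -/
variable (k : Type) [Field k] (H : Type) [Ring H] [Algebra k H]

/-- Given an extension `A ⊆ H` with a common two-sided ideal `I ⊆ A`, the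
algebra `B = [[A, H], [I, H]]` of `2 × 2` matrices with entries constrained as
indicated, a subalgebra of the full `2 × 2` matrix algebra over `H`. -/
def Bmat (I : TwoSidedIdeal H) (A : Subalgebra k H) (hIA : ∀ x ∈ I, x ∈ A) :
    Subalgebra k (Matrix (Fin 2) (Fin 2) H) where
  carrier := {M | M 0 0 ∈ A ∧ M 1 0 ∈ I}
  add_mem' := by
    rintro M N ⟨hM0, hM1⟩ ⟨hN0, hN1⟩
    exact ⟨add_mem hM0 hN0, I.add_mem hM1 hN1⟩
  mul_mem' := by
    rintro M N ⟨hM0, hM1⟩ ⟨hN0, hN1⟩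
    constructor
    · show ∑ l, M 0 l * N l 0 ∈ A
      rw [Fin.sum_univ_two]
      exact add_mem (mul_mem hM0 hN0) (hIA _ (I.mul_mem_left _ _ hN1))
    · show ∑ l, M 1 l * N l 0 ∈ I
      rw [Fin.sum_univ_two]
      exact I.add_mem (I.mul_mem_right _ _ hM1) (I.mul_mem_left _ _ hN1)
  algebraMap_mem' := by
    intro r
    constructor
    · show (algebraMap k (Matrix (Fin 2) (Fin 2) H)) r 0 0 ∈ A
      rw [Matrix.algebraMap_matrix_apply, if_pos rfl]
      exact A.algebraMap_mem r
    · show (algebraMap k (Matrix (Fin 2) (Fin 2) H)) r 1 0 ∈ I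
      rw [Matrix.algebraMap_matrix_apply, if_neg (by decide)]
      exact I.zero_mem

/-- The restriction of a two-sided ideal `I ⊆ A ⊆ H` of `H` to the subalgebra
`A`. -/
def restrictIdeal (I : TwoSidedIdeal H) (A : Subalgebra k H) : TwoSidedIdeal ↥A :=
  TwoSidedIdeal.mk' {a : ↥A | (a : H) ∈ I}
    (by show ((0 : ↥A) : H) ∈ I; rw [Subalgebra.coe_zero]; exact I.zero_mem)
    (fun {x y} hx hy => by
      show ((x + y : ↥A) : H) ∈ I
      rw [Subalgebra.coe_add]; exact I.add_mem hx hy)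
    (fun {x} hx => by
      show ((-x : ↥A) : H) ∈ I
      rw [Subalgebra.coe_neg]; exact I.neg_mem hx)
    (fun {x y} hy => by
      show ((x * y : ↥A) : H) ∈ I
      rw [Subalgebra.coe_mul]; exact I.mul_mem_left _ _ hy)
    (fun {x y} hx => by
      show ((x * y : ↥A) : H) ∈ I
      rw [Subalgebra.coe_mul]; exact I.mul_mem_right _ _ hx)

section MyAux1
variable {R S : Type*} [Ring R] [Ring S]

lemma pi_isSemisimpleModule {ι : Type*} [Finite ι] (N : ι → Type*)
    [∀ i, AddCommGroup (N i)] [∀ i, Module R (N i)] [∀ i, IsSemisimpleModule R (N i)] :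
    IsSemisimpleModule R (∀ i, N i) := by
  classical
  cases nonempty_fintype ι
  refine isSemisimpleModule_of_isSemisimpleModule_submodule'
    (p := fun i => LinearMap.range (LinearMap.single R N i)) (fun i => ?_) ?_
  · exact IsSemisimpleModule.congr
      (LinearEquiv.ofInjective _ (Pi.single_injective (M := N) i)).symm
  · rw [eq_top_iff]
    intro x _
    rw [← Finset.univ_sum_single x]
    exact Submodule.sum_mem _ fun i _ => Submodule.mem_iSup_of_mem i ⟨x i, rfl⟩

lemma isSemisimpleRing_of_jacobson_bot [IsArtinianRing R]
    (h : (⊥ : Ideal R).jacobson = ⊥) : IsSemisimpleRing R := by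
  classical
  let 𝒮 : Set (Ideal R) := {J | ∃ s : Finset (Ideal R), (∀ M ∈ s, M.IsMaximal) ∧ J = s.inf id}
  obtain ⟨m, ⟨s, hsmax, rfl⟩, hmin⟩ :=
    IsArtinian.set_has_minimal 𝒮 ⟨⊤, ∅, by simp, by simp⟩
  have hbot : s.inf id = ⊥ := by
    have hle : s.inf id ≤ (⊥ : Ideal R).jacobson := by
      refine le_sInf fun J hJ => ?_
      have hmem : (insert J s).inf id ∈ 𝒮 :=
        ⟨insert J s, fun M hM => (Finset.mem_insert.1 hM).elim (fun e => e ▸ hJ.2) (hsmax M), rfl⟩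
      have hle : (insert J s).inf id ≤ s.inf id := by
        rw [Finset.inf_insert]; exact inf_le_right
      have heq : (insert J s).inf id = s.inf id :=
        hle.lt_or_eq.resolve_left (hmin _ hmem)
      calc s.inf id = (insert J s).inf id := heq.symm
        _ ≤ J := by rw [Finset.inf_insert]; exact inf_le_left
    rw [h] at hle
    exact le_bot_iff.1 hle
  -- the embedding into the product of simple quotients
  let ι := {J : Ideal R // J ∈ s}
  let f : R →ₗ[R] (∀ J : ι, R ⧸ (J : Ideal R)) := LinearMap.pi fun J => (J : Ideal R).mkQ
  have hker : LinearMap.ker f = ⊥ := by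
    rw [LinearMap.ker_pi]
    simp only [Submodule.ker_mkQ]
    rw [← hbot, Finset.inf_id_eq_sInf, sInf_eq_iInf']
    rfl
  haveI : ∀ J : ι, IsSimpleModule R (R ⧸ (J : Ideal R)) := fun J =>
    isSimpleModule_iff_isCoatom.2 (Ideal.isMaximal_def.1 (hsmax J J.2))
  haveI : IsSemisimpleModule R (∀ J : ι, R ⧸ (J : Ideal R)) := pi_isSemisimpleModule _
  haveI : IsSemisimpleModule R (LinearMap.range f) := IsSemisimpleModule.submodule R (∀ J : ι, R ⧸ (J : Ideal R)) (m := LinearMap.range f)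
  have e : R ≃ₗ[R] LinearMap.range f := LinearEquiv.ofInjective f (LinearMap.ker_eq_bot.1 hker)
  exact IsSemisimpleModule.congr (M := ↥(LinearMap.range f)) e

end MyAux1

section MyAux2
variable {R S : Type*} [Ring R] [Ring S]

lemma nakayama_span {M : Type*} [AddCommGroup M] [Module R M] (s : Finset M)
    (hs : Submodule.span R (s : Set M) ≤
      (⊥ : Ideal R).jacobson • Submodule.span R (s : Set M)) :
    Submodule.span R (s : Set M) = ⊥ := by
  classical
  induction s using Finset.induction_on with
  | empty => simp
  | @insert a t ha ih =>
    have hJr : ∀ x ∈ (⊥ : Ideal R).jacobson, ∀ r : R, x * r ∈ (⊥ : Ideal R).jacobson :=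
      fun x hx r => Ideal.mul_mem_right r _ hx
    rw [Finset.coe_insert] at hs ⊢
    have key : Submodule.span R (insert a (t : Set M)) = Submodule.span R (t : Set M) := by
      have haN : a ∈ Submodule.span R (insert a (t : Set M)) :=
        Submodule.subset_span (Set.mem_insert a _)
      have := hs haN
      rw [Submodule.span_insert, Submodule.smul_sup] at this
      obtain ⟨x, hx, y, hy, hxy⟩ := Submodule.mem_sup.1 this
      have hx' : ∃ c ∈ (⊥ : Ideal R).jacobson, x = c • a := by
        refine Submodule.smul_induction_on hx ?_ ?_
        · intro r hr n hn
          obtain ⟨u, rfl⟩ := Submodule.mem_span_singleton.1 hn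
          exact ⟨r * u, hJr r hr u, smul_smul r u a⟩
        · rintro _ _ ⟨c, hc, rfl⟩ ⟨c', hc', rfl⟩
          exact ⟨c + c', Ideal.add_mem _ hc hc', (add_smul c c' a).symm⟩
      obtain ⟨c, hc, rfl⟩ := hx'
      have hy' : y ∈ Submodule.span R (t : Set M) :=
        (Submodule.smul_le.2 fun r _ n hn => Submodule.smul_mem _ r hn) hy
      obtain ⟨z, hz⟩ := Ideal.exists_mul_sub_mem_of_sub_one_mem_jacobson (1 - c)
        (show (1 - c) - 1 ∈ (⊥ : Ideal R).jacobson by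
          simpa using ((⊥ : Ideal R).jacobson.neg_mem hc))
      rw [Ideal.mem_bot, sub_eq_zero] at hz
      have ha' : a ∈ Submodule.span R (t : Set M) := by
        have h1 : (1 - c) • a = y := by
          rw [sub_smul, one_smul]
          exact sub_eq_of_eq_add' hxy.symm
        have : a = z • y := by
          rw [← h1, smul_smul, hz, one_smul]
        rw [this]
        exact Submodule.smul_mem _ z hy'
      rw [Submodule.span_insert]
      rw [sup_eq_right.2 (Submodule.span_le.2 (Set.singleton_subset_iff.2 ha'))]
    rw [key] at hs ⊢
    exact ih hs

lemma nakayama_ideal (N : Ideal R) (hfg : N.FG)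
    (h : N ≤ (⊥ : Ideal R).jacobson • N) : N = ⊥ := by
  obtain ⟨s, rfl⟩ := hfg
  exact nakayama_span s h

lemma jacobson_bot_of_surjective (f : R →+* S) (hf : Function.Surjective f)
    (h : ∀ x : R, f x = 0 ↔ x ∈ (⊥ : Ideal R).jacobson) :
    (⊥ : Ideal S).jacobson = ⊥ := by
  have hcomap := Ideal.comap_jacobson_of_surjective hf (K := (⊥ : Ideal S))
  rw [eq_bot_iff]
  intro y hy
  obtain ⟨x, rfl⟩ := hf y
  have hx : x ∈ Ideal.comap f ((⊥ : Ideal S).jacobson) := hy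
  rw [hcomap] at hx
  have h2 : (Ideal.comap f (⊥ : Ideal S)).jacobson ≤ (⊥ : Ideal R).jacobson := by
    have : Ideal.comap f (⊥ : Ideal S) ≤ (⊥ : Ideal R).jacobson := fun u hu =>
      (h u).1 (by simpa [Ideal.mem_comap, Ideal.mem_bot] using hu)
    simpa [Ideal.jacobson_idem] using Ideal.jacobson_mono this
  rw [Ideal.mem_bot]
  exact (h x).2 (h2 hx)

lemma jacobson_bot_of_ringEquiv (e : R ≃+* S) (h : (⊥ : Ideal R).jacobson = ⊥) :
    (⊥ : Ideal S).jacobson = ⊥ :=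
  jacobson_bot_of_surjective e.toRingHom e.surjective fun x => by
    simp [map_eq_zero_iff _ e.injective, h, Ideal.mem_bot]

lemma jacobson_bot_prod {P Q : Type*} [Ring P] [Ring Q]
    (hP : (⊥ : Ideal P).jacobson = ⊥) (hQ : (⊥ : Ideal Q).jacobson = ⊥) :
    (⊥ : Ideal (P × Q)).jacobson = ⊥ := by
  rw [eq_bot_iff]
  intro x hx
  have h1 : x.1 = 0 := by
    have hle : (⊥ : Ideal (P × Q)).jacobson ≤ (Ideal.comap (RingHom.fst P Q) ⊥).jacobson :=
      Ideal.jacobson_mono bot_le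
    have := hle hx
    rw [← Ideal.comap_jacobson_of_surjective (f := RingHom.fst P Q) Prod.fst_surjective] at this
    rw [hP] at this
    simpa [Ideal.mem_comap, Ideal.mem_bot] using this
  have h2 : x.2 = 0 := by
    have hle : (⊥ : Ideal (P × Q)).jacobson ≤ (Ideal.comap (RingHom.snd P Q) ⊥).jacobson :=
      Ideal.jacobson_mono bot_le
    have := hle hx
    rw [← Ideal.comap_jacobson_of_surjective (f := RingHom.snd P Q) Prod.snd_surjective] at this
    rw [hQ] at this
    simpa [Ideal.mem_comap, Ideal.mem_bot] using this
  rw [Ideal.mem_bot, Prod.ext_iff]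
  exact ⟨h1, h2⟩
end MyAux2


section MyAux3
variable {R S : Type*} [Ring R] [Ring S]

def kerLiftHom (f : R →+* S) : (TwoSidedIdeal.ker f).ringCon.Quotient →+* S where
  toFun := fun x => Quotient.liftOn' x f fun _ _ (h : f _ = f _) => h
  map_one' := map_one f
  map_mul' := fun x y => Quotient.inductionOn₂' x y fun a b => map_mul f a b
  map_zero' := map_zero f
  map_add' := fun x y => Quotient.inductionOn₂' x y fun a b => map_add f a b

noncomputable def kerEquivOfSurjective (f : R →+* S) (hf : Function.Surjective f) :
    (TwoSidedIdeal.ker f).ringCon.Quotient ≃+* S :=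
  RingEquiv.ofBijective (kerLiftHom f)
    ⟨fun x y => Quotient.inductionOn₂' x y fun a b (h : f a = f b) => Quotient.sound' h,
     fun s => by obtain ⟨a, ha⟩ := hf s; exact ⟨(TwoSidedIdeal.ker f).ringCon.mk' a, ha⟩⟩
end MyAux3

lemma mk'_eq_zero_iff' {R : Type*} [Ring R] (I : TwoSidedIdeal R) (x : R) :
    I.ringCon.mk' x = 0 ↔ x ∈ I := by
  rw [show I.ringCon.mk' x = ((x : I.ringCon.Quotient)) from rfl,
    show (0 : I.ringCon.Quotient) = (((0 : R) : I.ringCon.Quotient)) from rfl, RingCon.eq]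
  exact (I.mem_iff x).symm

lemma mk'_eq_mk'_iff' {R : Type*} [Ring R] (I : TwoSidedIdeal R) (x y : R) :
    I.ringCon.mk' x = I.ringCon.mk' y ↔ x - y ∈ I := by
  rw [show I.ringCon.mk' x = ((x : I.ringCon.Quotient)) from rfl,
    show I.ringCon.mk' y = ((y : I.ringCon.Quotient)) from rfl, RingCon.eq, I.rel_iff]

lemma mem_restrictIdeal_iff (I : TwoSidedIdeal H) (A : Subalgebra k H) (a : ↥A) :
    a ∈ restrictIdeal k H I A ↔ (a : H) ∈ I := TwoSidedIdeal.mem_mk' _ _ _ _ _ _ _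

set_option maxHeartbeats 1000000 in
set_option synthInstance.maxHeartbeats 200000 in
def phiB (I : TwoSidedIdeal H) (A : Subalgebra k H) (hIA : ∀ x ∈ I, x ∈ A) :
    ↥(Bmat k H I A hIA) →+*
      ((restrictIdeal k H I A).ringCon.Quotient × I.ringCon.Quotient) where
  toFun M := ((restrictIdeal k H I A).ringCon.mk'
      ⟨(M : Matrix (Fin 2) (Fin 2) H) 0 0, M.2.1⟩,
    I.ringCon.mk' ((M : Matrix (Fin 2) (Fin 2) H) 1 1))
  map_one' := by
    refine Prod.ext ?_ ?_
    · show (restrictIdeal k H I A).ringCon.mk' _ = 1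
      rw [← map_one (restrictIdeal k H I A).ringCon.mk', mk'_eq_mk'_iff', mem_restrictIdeal_iff]
      show (1 : Matrix (Fin 2) (Fin 2) H) 0 0 - ((1 : ↥A) : H) ∈ I
      rw [Matrix.one_apply_eq, OneMemClass.coe_one, sub_self]
      exact I.zero_mem
    · show I.ringCon.mk' _ = 1
      rw [← map_one I.ringCon.mk', mk'_eq_mk'_iff']
      show (1 : Matrix (Fin 2) (Fin 2) H) 1 1 - 1 ∈ I
      rw [Matrix.one_apply_eq, sub_self]
      exact I.zero_mem
  map_mul' := by
    intro M N
    refine Prod.ext ?_ ?_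
    · show (restrictIdeal k H I A).ringCon.mk' _ =
        (restrictIdeal k H I A).ringCon.mk' _ * (restrictIdeal k H I A).ringCon.mk' _
      rw [← map_mul, mk'_eq_mk'_iff', mem_restrictIdeal_iff]
      show ((M * N : ↥(Bmat k H I A hIA)) : Matrix (Fin 2) (Fin 2) H) 0 0 -
        (M : Matrix (Fin 2) (Fin 2) H) 0 0 * (N : Matrix (Fin 2) (Fin 2) H) 0 0 ∈ I
      rw [show (((M * N : ↥(Bmat k H I A hIA)) : Matrix (Fin 2) (Fin 2) H)) =
          ((M : Matrix (Fin 2) (Fin 2) H)) * ((N : Matrix (Fin 2) (Fin 2) H)) from rfl,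
        Matrix.mul_apply, Fin.sum_univ_two, add_sub_cancel_left]
      exact I.mul_mem_left _ _ N.2.2
    · show I.ringCon.mk' _ = I.ringCon.mk' _ * I.ringCon.mk' _
      rw [← map_mul, mk'_eq_mk'_iff']
      show ((M * N : ↥(Bmat k H I A hIA)) : Matrix (Fin 2) (Fin 2) H) 1 1 -
        (M : Matrix (Fin 2) (Fin 2) H) 1 1 * (N : Matrix (Fin 2) (Fin 2) H) 1 1 ∈ I
      rw [show (((M * N : ↥(Bmat k H I A hIA)) : Matrix (Fin 2) (Fin 2) H)) =
          ((M : Matrix (Fin 2) (Fin 2) H)) * ((N : Matrix (Fin 2) (Fin 2) H)) from rfl,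
        Matrix.mul_apply, Fin.sum_univ_two, add_sub_cancel_right]
      exact I.mul_mem_right _ _ M.2.2
  map_zero' := by
    refine Prod.ext ?_ ?_
    · show (restrictIdeal k H I A).ringCon.mk' _ = 0
      rw [mk'_eq_zero_iff', mem_restrictIdeal_iff]
      show (0 : Matrix (Fin 2) (Fin 2) H) 0 0 ∈ I
      rw [Matrix.zero_apply]
      exact I.zero_mem
    · show I.ringCon.mk' _ = 0
      rw [mk'_eq_zero_iff']
      show (0 : Matrix (Fin 2) (Fin 2) H) 1 1 ∈ I
      rw [Matrix.zero_apply]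
      exact I.zero_mem
  map_add' := by
    intro M N
    refine Prod.ext ?_ ?_
    · show (restrictIdeal k H I A).ringCon.mk' _ =
        (restrictIdeal k H I A).ringCon.mk' _ + (restrictIdeal k H I A).ringCon.mk' _
      rw [← map_add, mk'_eq_mk'_iff', mem_restrictIdeal_iff]
      show ((M + N : ↥(Bmat k H I A hIA)) : Matrix (Fin 2) (Fin 2) H) 0 0 -
        ((M : Matrix (Fin 2) (Fin 2) H) 0 0 + (N : Matrix (Fin 2) (Fin 2) H) 0 0) ∈ I
      rw [show (((M + N : ↥(Bmat k H I A hIA)) : Matrix (Fin 2) (Fin 2) H)) =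
          ((M : Matrix (Fin 2) (Fin 2) H)) + ((N : Matrix (Fin 2) (Fin 2) H)) from rfl,
        Matrix.add_apply, sub_self]
      exact I.zero_mem
    · show I.ringCon.mk' _ = I.ringCon.mk' _ + I.ringCon.mk' _
      rw [← map_add, mk'_eq_mk'_iff']
      show ((M + N : ↥(Bmat k H I A hIA)) : Matrix (Fin 2) (Fin 2) H) 1 1 -
        ((M : Matrix (Fin 2) (Fin 2) H) 1 1 + (N : Matrix (Fin 2) (Fin 2) H) 1 1) ∈ I
      rw [show (((M + N : ↥(Bmat k H I A hIA)) : Matrix (Fin 2) (Fin 2) H)) =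
          ((M : Matrix (Fin 2) (Fin 2) H)) + ((N : Matrix (Fin 2) (Fin 2) H)) from rfl,
        Matrix.add_apply, sub_self]
      exact I.zero_mem

lemma phiB_surjective (I : TwoSidedIdeal H) (A : Subalgebra k H) (hIA : ∀ x ∈ I, x ∈ A) :
    Function.Surjective (phiB k H I A hIA) := by
  rintro ⟨x, y⟩
  obtain ⟨a, rfl⟩ : ∃ a : ↥A, (restrictIdeal k H I A).ringCon.mk' a = x :=
    Quotient.inductionOn' x fun a => ⟨a, rfl⟩
  obtain ⟨h, rfl⟩ : ∃ h : H, I.ringCon.mk' h = y :=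
    Quotient.inductionOn' y fun h => ⟨h, rfl⟩
  refine ⟨⟨!![(a : H), 0; 0, h], ?_, ?_⟩, ?_⟩
  · show !![(a : H), 0; 0, h] 0 0 ∈ A
    simp [a.2]
  · show !![(a : H), 0; 0, h] 1 0 ∈ I
    simp [I.zero_mem]
  · refine Prod.ext ?_ ?_
    · show (restrictIdeal k H I A).ringCon.mk' _ = (restrictIdeal k H I A).ringCon.mk' a
      rw [mk'_eq_mk'_iff', mem_restrictIdeal_iff]
      show !![(a : H), 0; 0, h] 0 0 - (a : H) ∈ I
      simp [I.zero_mem]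
    · show I.ringCon.mk' (!![(a : H), 0; 0, h] 1 1) = I.ringCon.mk' h
      rw [mk'_eq_mk'_iff']
      show !![(a : H), 0; 0, h] 1 1 - h ∈ I
      simp [I.zero_mem]

set_option maxHeartbeats 1000000 in
/-- Let `A ⊆ H` be finite-dimensional `k`-algebras with common
Jacobson radical `I = rad A = rad H`, and let `B = [[A, H], [I, H]]`.  Then
`L = [[I, H], [I, I]]` is a two-sided ideal of `B`, `L` is nilpotent,
`B/L ≅ (A/I) × (H/I)` is semisimple, and hence `L` is the Jacobson radical of
`B`. -/
theorem stmt_4 [FiniteDimensional k H] (I : TwoSidedIdeal H) (A : Subalgebra k H)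
    (hIA : ∀ x ∈ I, x ∈ A)
    -- `I` is the Jacobson radical of `H` ...
    (hI : (I : Set H) = (((⊥ : Ideal H).jacobson : Ideal H) : Set H))
    -- ... and restricts to the Jacobson radical of `A`
    (hradA : ∀ a : ↥A, a ∈ (⊥ : Ideal ↥A).jacobson ↔ (a : H) ∈ I) :
    ∃ L : TwoSidedIdeal ↥(Bmat k H I A hIA),
      -- `L = [[I, H], [I, I]]`
      (∀ M : ↥(Bmat k H I A hIA), M ∈ L ↔
        ((M : Matrix (Fin 2) (Fin 2) H) 0 0 ∈ I ∧
         (M : Matrix (Fin 2) (Fin 2) H) 1 0 ∈ I ∧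
         (M : Matrix (Fin 2) (Fin 2) H) 1 1 ∈ I)) ∧
      -- `L` is nilpotent
      (∃ n : ℕ, 1 ≤ n ∧ ∀ f : Fin n → ↥(Bmat k H I A hIA),
        (∀ i, f i ∈ L) → (List.ofFn f).prod = 0) ∧
      -- `B/L ≅ (A/I) × (H/I)`, which is semisimple
      Nonempty (L.ringCon.Quotient ≃+*
        ((restrictIdeal k H I A).ringCon.Quotient × I.ringCon.Quotient)) ∧
      IsSemisimpleRing L.ringCon.Quotient ∧
      -- hence `L` is the Jacobson radical of `B`
      (L : Set ↥(Bmat k H I A hIA)) =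
        (((⊥ : Ideal ↥(Bmat k H I A hIA)).jacobson : Ideal _) : Set _) := by
  classical
  set φ := phiB k H I A hIA with hφdef
  have hφ : Function.Surjective φ := phiB_surjective k H I A hIA
  set L : TwoSidedIdeal ↥(Bmat k H I A hIA) := TwoSidedIdeal.ker φ with hLdef
  -- membership characterization
  have memL : ∀ M : ↥(Bmat k H I A hIA), M ∈ L ↔
      ((M : Matrix (Fin 2) (Fin 2) H) 0 0 ∈ I ∧
       (M : Matrix (Fin 2) (Fin 2) H) 1 0 ∈ I ∧
       (M : Matrix (Fin 2) (Fin 2) H) 1 1 ∈ I) := by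
    intro M
    rw [hLdef, TwoSidedIdeal.mem_ker]
    constructor
    · intro h0
      have h1 := congrArg Prod.fst h0
      have h2 := congrArg Prod.snd h0
      rw [show (φ M).1 = (restrictIdeal k H I A).ringCon.mk'
          ⟨(M : Matrix (Fin 2) (Fin 2) H) 0 0, M.2.1⟩ from rfl] at h1
      rw [show (φ M).2 = I.ringCon.mk' ((M : Matrix (Fin 2) (Fin 2) H) 1 1) from rfl] at h2
      rw [show ((0 : (restrictIdeal k H I A).ringCon.Quotient × I.ringCon.Quotient)).1
          = 0 from rfl] at h1
      rw [show ((0 : (restrictIdeal k H I A).ringCon.Quotient × I.ringCon.Quotient)).2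
          = 0 from rfl] at h2
      rw [mk'_eq_zero_iff', mem_restrictIdeal_iff] at h1
      rw [mk'_eq_zero_iff'] at h2
      exact ⟨h1, M.2.2, h2⟩
    · rintro ⟨h00, _, h11⟩
      refine Prod.ext ?_ ?_
      · show (restrictIdeal k H I A).ringCon.mk' _ = 0
        rw [mk'_eq_zero_iff', mem_restrictIdeal_iff]
        exact h00
      · show I.ringCon.mk' _ = 0
        rw [mk'_eq_zero_iff']
        exact h11
  -- the power chain of I and its vanishing
  haveI : IsArtinian H H := isArtinian_of_tower k inferInstance
  haveI : IsNoetherian H H := isNoetherian_of_tower k inferInstance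
  set J : Ideal H := TwoSidedIdeal.asIdeal I with hJ
  have memJ : ∀ x : H, x ∈ J ↔ x ∈ I := fun x => TwoSidedIdeal.mem_asIdeal
  let F : ℕ → Ideal H := fun n => Nat.rec J (fun _ p => J • p) n
  have hFsucc : ∀ n, F (n + 1) = J • F n := fun n => rfl
  have hFanti : ∀ n, F (n + 1) ≤ F n := fun n =>
    (hFsucc n) ▸ Submodule.smul_le.2 fun r _ m hm => Submodule.smul_mem _ r hm
  have hA : Antitone F := antitone_nat_of_succ_le hFanti
  obtain ⟨n, hn⟩ := IsArtinian.monotone_stabilizes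
    (⟨fun n => F n, fun a b hab => hA hab⟩ : ℕ →o (Submodule H H)ᵒᵈ)
  have hstab : F n = F (n + 1) := hn (n + 1) (Nat.le_succ n)
  have hJle : J ≤ (⊥ : Ideal H).jacobson := by
    intro x hx
    have hx' : x ∈ (I : Set H) := (memJ x).1 hx
    rw [hI] at hx'
    exact hx'
  have hFbot : F n = ⊥ := by
    refine nakayama_ideal (F n) (IsNoetherian.noetherian _) ?_
    calc F n = J • F n := hstab
      _ ≤ (⊥ : Ideal H).jacobson • F n := Submodule.smul_mono_left hJle
  -- products of two L-shaped matrices have all entries in I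
  have hL2 : ∀ a b : Matrix (Fin 2) (Fin 2) H,
      (a 0 0 ∈ I ∧ a 1 0 ∈ I ∧ a 1 1 ∈ I) → (b 0 0 ∈ I ∧ b 1 0 ∈ I ∧ b 1 1 ∈ I) →
      ∀ p q, (a * b) p q ∈ I := by
    intro a b ha hb p q
    rw [Matrix.mul_apply, Fin.sum_univ_two]
    refine I.add_mem (I.mul_mem_right _ _ ?_) (I.mul_mem_left _ _ ?_)
    · fin_cases p
      · exact ha.1
      · exact ha.2.1
    · fin_cases q
      · exact hb.2.1
      · exact hb.2.2
  -- products of 2j+2 L-shaped matrices have all entries in F j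
  have hmat : ∀ j : ℕ, ∀ l : List (Matrix (Fin 2) (Fin 2) H),
      (∀ M ∈ l, M 0 0 ∈ I ∧ M 1 0 ∈ I ∧ M 1 1 ∈ I) → l.length = 2 * j + 2 →
      ∀ p q, l.prod p q ∈ F j := by
    intro j
    induction j with
    | zero =>
      intro l hl hlen p q
      obtain ⟨a, b, rfl⟩ := List.length_eq_two.1 hlen
      rw [show ([a, b] : List (Matrix (Fin 2) (Fin 2) H)).prod = a * b by simp]
      exact (memJ _).2 (hL2 a b (hl a (by simp)) (hl b (by simp)) p q)
    | succ j ih =>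
      intro l hl hlen p q
      rcases l with _ | ⟨a, l'⟩
      · simp at hlen
      rcases l' with _ | ⟨b, rest⟩
      · simp at hlen
      have hrest : rest.length = 2 * j + 2 := by
        simp only [List.length_cons] at hlen; omega
      have h1 : ∀ p q, rest.prod p q ∈ F j :=
        ih rest (fun M hM => hl M (by simp [hM])) hrest
      have hprod : (a :: b :: rest).prod = (a * b) * rest.prod := by
        rw [List.prod_cons, List.prod_cons, mul_assoc]
      rw [hprod, Matrix.mul_apply, Fin.sum_univ_two]
      have hab : ∀ p' q', (a * b) p' q' ∈ J := fun p' q' =>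
        (memJ _).2 (hL2 a b (hl a (by simp)) (hl b (by simp)) p' q')
      refine Submodule.add_mem _ ?_ ?_ <;>
      · rw [hFsucc]
        exact Submodule.smul_mem_smul (hab _ _) (h1 _ _)
  have hnilB : ∀ f : Fin (2 * n + 2) → ↥(Bmat k H I A hIA),
      (∀ i, f i ∈ L) → (List.ofFn f).prod = 0 := by
    intro f hf
    have hcoe : (((List.ofFn f).prod : ↥(Bmat k H I A hIA)) : Matrix (Fin 2) (Fin 2) H) =
        (List.ofFn fun i => ((f i : Matrix (Fin 2) (Fin 2) H))).prod := by
      rw [show (List.ofFn fun i => ((f i : Matrix (Fin 2) (Fin 2) H))) =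
          ((List.ofFn f).map ((Bmat k H I A hIA).val)) from (List.map_ofFn (f := f) (g := (Bmat k H I A hIA).val)).symm]
      exact map_list_prod ((Bmat k H I A hIA).val) (List.ofFn f)
    have hz : (((List.ofFn f).prod : ↥(Bmat k H I A hIA)) : Matrix (Fin 2) (Fin 2) H) = 0 := by
      apply Matrix.ext
      intro p q
      rw [hcoe]
      have hmem : ∀ M ∈ (List.ofFn fun i => ((f i : Matrix (Fin 2) (Fin 2) H))),
          M 0 0 ∈ I ∧ M 1 0 ∈ I ∧ M 1 1 ∈ I := by
        intro M hM
        rw [List.mem_ofFn] at hM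
        obtain ⟨i, rfl⟩ := hM
        exact (memL (f i)).1 (hf i)
      have := hmat n _ hmem (by simp) p q
      rw [hFbot] at this
      simpa using this
    exact Subtype.ext (by simpa using hz)
  refine ⟨L, memL, ⟨2 * n + 2, by omega, hnilB⟩, ⟨kerEquivOfSurjective φ hφ⟩, ?_, ?_⟩
  -- semisimplicity of the quotient
  · haveI : IsArtinianRing ↥A := isArtinian_of_tower k inferInstance
    haveI : IsArtinianRing H := isArtinian_of_tower k inferInstance
    have hsurjA : Function.Surjective (restrictIdeal k H I A).ringCon.mk' :=
      fun q => Quotient.inductionOn' q fun a => ⟨a, rfl⟩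
    have hsurjH : Function.Surjective I.ringCon.mk' :=
      fun q => Quotient.inductionOn' q fun a => ⟨a, rfl⟩
    haveI : IsArtinianRing (restrictIdeal k H I A).ringCon.Quotient :=
      hsurjA.isArtinianRing
    haveI : IsArtinianRing I.ringCon.Quotient := hsurjH.isArtinianRing
    have hjA : (⊥ : Ideal (restrictIdeal k H I A).ringCon.Quotient).jacobson = ⊥ :=
      jacobson_bot_of_surjective _ hsurjA fun x => by
        rw [mk'_eq_zero_iff', mem_restrictIdeal_iff]
        exact (hradA x).symm
    have hjH : (⊥ : Ideal I.ringCon.Quotient).jacobson = ⊥ :=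
      jacobson_bot_of_surjective _ hsurjH fun x => by
        rw [mk'_eq_zero_iff']
        constructor
        · intro hx
          have : x ∈ (I : Set H) := hx
          rw [hI] at this
          exact this
        · intro hx
          show x ∈ (I : Set H)
          rw [hI]
          exact hx
    haveI : IsSemisimpleRing (restrictIdeal k H I A).ringCon.Quotient :=
      isSemisimpleRing_of_jacobson_bot hjA
    haveI : IsSemisimpleRing I.ringCon.Quotient :=
      isSemisimpleRing_of_jacobson_bot hjH
    exact ((kerEquivOfSurjective φ hφ).symm).isSemisimpleRing
  -- L is the Jacobson radical
  · have hsurjA : Function.Surjective (restrictIdeal k H I A).ringCon.mk' :=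
      fun q => Quotient.inductionOn' q fun a => ⟨a, rfl⟩
    have hsurjH : Function.Surjective I.ringCon.mk' :=
      fun q => Quotient.inductionOn' q fun a => ⟨a, rfl⟩
    have hjA : (⊥ : Ideal (restrictIdeal k H I A).ringCon.Quotient).jacobson = ⊥ :=
      jacobson_bot_of_surjective _ hsurjA fun x => by
        rw [mk'_eq_zero_iff', mem_restrictIdeal_iff]
        exact (hradA x).symm
    have hjH : (⊥ : Ideal I.ringCon.Quotient).jacobson = ⊥ :=
      jacobson_bot_of_surjective _ hsurjH fun x => by
        rw [mk'_eq_zero_iff']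
        constructor
        · intro hx
          have : x ∈ (I : Set H) := hx
          rw [hI] at this
          exact this
        · intro hx
          show x ∈ (I : Set H)
          rw [hI]
          exact hx
    have hq0 : (⊥ : Ideal L.ringCon.Quotient).jacobson = ⊥ :=
      jacobson_bot_of_ringEquiv (kerEquivOfSurjective φ hφ).symm
        (jacobson_bot_prod hjA hjH)
    have hπ : Function.Surjective L.ringCon.mk' :=
      fun q => Quotient.inductionOn' q fun a => ⟨a, rfl⟩
    ext x
    simp only [SetLike.mem_coe]
    constructor
    · -- L ⊆ jacobson ⊥ : elements of L are "quasi-regular"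
      intro hx
      rw [Ideal.mem_jacobson_iff]
      intro y
      have hw : y * x ∈ L := L.mul_mem_left y x hx
      have hnil : IsNilpotent (y * x) := by
        refine ⟨2 * n + 2, ?_⟩
        have h0 := hnilB (fun _ => y * x) (fun _ => hw)
        rwa [List.ofFn_const, List.prod_replicate] at h0
      obtain ⟨u, hu⟩ := IsNilpotent.isUnit_add_one hnil
      refine ⟨(↑u⁻¹ : ↥(Bmat k H I A hIA)), ?_⟩
      have huz : (↑u⁻¹ : ↥(Bmat k H I A hIA)) * (y * x + 1) = 1 := by
        rw [← hu]; exact u.inv_mul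
      have hre : (↑u⁻¹ : ↥(Bmat k H I A hIA)) * y * x + ↑u⁻¹ - 1 =
          (↑u⁻¹ : ↥(Bmat k H I A hIA)) * (y * x + 1) - 1 := by noncomm_ring
      rw [hre, huz, sub_self]
      exact Submodule.zero_mem _
    · intro hx
      have h1 : x ∈ (Ideal.comap L.ringCon.mk' (⊥ : Ideal L.ringCon.Quotient)).jacobson :=
        Ideal.jacobson_mono bot_le hx
      rw [← Ideal.comap_jacobson_of_surjective hπ, hq0] at h1
      have h2 : L.ringCon.mk' x = 0 := by
        rwa [Ideal.mem_comap, Ideal.mem_bot] at h1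
      exact (mk'_eq_zero_iff' _ x).1 h2
end

section
/- In the dual numbers algebra A = k[ε]/(ε²) over a field k, for every n ≥ 1 the complex X_n = (A →^ε A →^ε … →^ε A) with n terms (differentials given by multiplication by ε) is an indecomposable complex of projective A-modules, i.e. its endomorphism ring in the homotopy category of complexes is local. -/
open CategoryTheory DualNumber

set_option maxHeartbeats 1000000
set_option synthInstance.maxHeartbeats 1000000

noncomputable section

variable (k : Type) [Field k] (n : ℕ)

/-- The terms of the complex `X_n`: the module `A = k[ε]/(ε²)` in degrees
`0, …, n−1` and `0` elsewhere. -/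
def Xobj (i : ℕ) : Submodule (DualNumber k) (DualNumber k) :=
  if i < n then ⊤ else ⊥

/-- The differentials of `X_n`: multiplication by `ε`. -/
def Xd (i : ℕ) : ↥(Xobj k n i) →ₗ[DualNumber k] ↥(Xobj k n (i + 1)) :=
  if h : i + 1 < n then
    { toFun := fun x => ⟨ε * x.val, by
        unfold Xobj
        rw [if_pos h]
        exact Submodule.mem_top⟩
      map_add' := fun x y => by
        apply Subtype.ext
        show ε * ((x : DualNumber k) + (y : DualNumber k))
            = ε * (x : DualNumber k) + ε * (y : DualNumber k)
        rw [mul_add]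
      map_smul' := fun r x => by
        apply Subtype.ext
        show ε * (r • (x : DualNumber k)) = r • (ε * (x : DualNumber k))
        rw [smul_eq_mul, smul_eq_mul, mul_left_comm] }
  else 0

/-- The squares in `X_n` vanish: `ε² = 0`. -/
lemma Xd_comp (i : ℕ) : (Xd k n (i + 1)).comp (Xd k n i) = 0 := by
  unfold Xd
  by_cases h2 : i + 1 + 1 < n
  · rw [dif_pos h2, dif_pos (by omega : i + 1 < n)]
    apply LinearMap.ext
    intro x
    apply Subtype.ext
    show ε * (ε * (x : DualNumber k)) = ((0 : ↥(Xobj k n (i + 1 + 1))) : DualNumber k)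
    rw [← mul_assoc, eps_mul_eps, zero_mul]
    simp
  · rw [dif_neg h2, LinearMap.zero_comp]

/-- The complex `X_n = (A →^ε A →^ε ⋯ →^ε A)` with `n` terms, in degrees
`0, …, n−1`, all differentials being multiplication by `ε`. -/
def Xcomplex : CochainComplex (ModuleCat (DualNumber k)) ℕ :=
  CochainComplex.of (fun i => ModuleCat.of (DualNumber k) ↥(Xobj k n i))
    (fun i => ModuleCat.ofHom (Xd k n i))
    (fun i => by ext1; exact Xd_comp k n i)

/- ### Auxiliary material for the proof -/

lemma mem_Xobj_of_lt {i : ℕ} (h : i < n) (x : DualNumber k) : x ∈ Xobj k n i := by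
  unfold Xobj; rw [if_pos h]; trivial

/-- The element `1 ∈ A` viewed in degree `i < n` of the complex. -/
def oneX {i : ℕ} (h : i < n) : ↥(Xobj k n i) := ⟨1, mem_Xobj_of_lt k n h 1⟩

lemma eq_smul_oneX {i : ℕ} (h : i < n) (x : ↥(Xobj k n i)) : x = x.val • oneX k n h := by
  apply Subtype.ext
  show x.val = x.val * 1
  rw [mul_one]

lemma apply_eq {i : ℕ} (h : i < n)
    (g : ↥(Xobj k n i) →ₗ[DualNumber k] ↥(Xobj k n i)) (x : ↥(Xobj k n i)) :
    (g x).val = x.val * (g (oneX k n h)).val := by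
  conv_lhs => rw [eq_smul_oneX k n h x, map_smul]
  rfl

lemma Xcomplex_d (i : ℕ) : (Xcomplex k n).d i (i + 1) = ModuleCat.ofHom (Xd k n i) :=
  CochainComplex.of_d (fun i => ModuleCat.of (DualNumber k) ↥(Xobj k n i))
    (fun i => ModuleCat.ofHom (Xd k n i)) i

lemma Xd_val {i : ℕ} (hi1 : i + 1 < n) (x : ↥(Xobj k n i)) :
    (Xd k n i x).val = ε * x.val := by
  unfold Xd
  rw [dif_pos hi1]
  rfl

lemma Xd_oneX {i : ℕ} (hi : i < n) (hi1 : i + 1 < n) :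
    Xd k n i (oneX k n hi) = (ε : DualNumber k) • oneX k n hi1 := by
  apply Subtype.ext
  rw [Xd_val k n hi1]
  show (ε : DualNumber k) * 1 = ε * 1
  rfl

lemma eps_mul_eq_eps_mul {x y : DualNumber k} (h : ε * x = ε * y) : x.fst = y.fst := by
  have := congrArg TrivSqZeroExt.snd h
  simpa [TrivSqZeroExt.snd_mul] using this

/-- The scalar part of the components of an endomorphism of `X_n` does not
depend on the degree. -/
lemma fst_succ (f : Xcomplex k n ⟶ Xcomplex k n) {i : ℕ} (hi : i < n) (hi1 : i + 1 < n) :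
    (f.f i (oneX k n hi)).val.fst = (f.f (i + 1) (oneX k n hi1)).val.fst := by
  have hcomm := f.comm i (i + 1)
  rw [Xcomplex_d k n i] at hcomm
  have happ : Xd k n i (f.f i (oneX k n hi)) = f.f (i + 1) (Xd k n i (oneX k n hi)) := by
    have := congrArg (fun g : (Xcomplex k n).X i ⟶ (Xcomplex k n).X (i + 1) =>
      g (oneX k n hi)) hcomm
    exact this
  rw [Xd_oneX k n hi hi1] at happ
  replace happ := happ.trans (map_smul (f.f (i + 1)).hom ε (oneX k n hi1))
  apply eps_mul_eq_eps_mul k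
  have h1 : (Xd k n i (f.f i (oneX k n hi))).val = ε * (f.f i (oneX k n hi)).val :=
    Xd_val k n hi1 _
  have h2 : (((ε : DualNumber k) • f.f (i + 1) (oneX k n hi1) : ↥(Xobj k n (i + 1)))).val
      = ε * (f.f (i + 1) (oneX k n hi1)).val := rfl
  rw [← h1, ← h2]
  exact congrArg Subtype.val happ

lemma fst_all (f : Xcomplex k n ⟶ Xcomplex k n) (h0 : 0 < n) :
    ∀ i : ℕ, ∀ hi : i < n,
      (f.f i (oneX k n hi)).val.fst = (f.f 0 (oneX k n h0)).val.fst := by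
  intro i
  induction i with
  | zero => intro hi; rfl
  | succ j ih =>
      intro hi
      have hj : j < n := by omega
      rw [← fst_succ k n f hj hi]
      exact ih hj

/-- A chain endomorphism of `X_n` whose scalar part is nonzero is an
isomorphism of complexes. -/
lemma isIso_of_fst_ne (f : Xcomplex k n ⟶ Xcomplex k n) (h0 : 0 < n)
    (hc : (f.f 0 (oneX k n h0)).val.fst ≠ 0) : IsIso f := by
  have key : ∀ i : ℕ, IsIso (f.f i) := by
    intro i
    by_cases hi : i < n
    · have hfst : ((f.f i (oneX k n hi)).val).fst ≠ 0 := by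
        rw [fst_all k n f h0 i hi]; exact hc
      have hu : IsUnit ((f.f i (oneX k n hi)).val) := by
        rw [TrivSqZeroExt.isUnit_iff_isUnit_fst]
        exact hfst.isUnit
      have hbij : Function.Bijective (f.f i) := by
        constructor
        · intro x y hxy
          apply Subtype.ext
          refine hu.mul_right_cancel ?_
          exact (apply_eq k n hi (f.f i).hom x).symm.trans
            ((congrArg Subtype.val hxy).trans (apply_eq k n hi (f.f i).hom y))
        · intro y
          refine ⟨(y.val * ↑hu.unit⁻¹) • oneX k n hi, ?_⟩
          apply Subtype.ext
          have h5 : ((f.f i) ((y.val * ↑hu.unit⁻¹) • oneX k n hi)).val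
              = (y.val * ↑hu.unit⁻¹) * (f.f i (oneX k n hi)).val := by
            exact congrArg Subtype.val (map_smul (f.f i).hom _ _)
          rw [h5, mul_assoc, hu.val_inv_mul, mul_one]
      letI e := LinearEquiv.ofBijective
        (f.f i).hom hbij
      refine ⟨ModuleCat.ofHom e.symm.toLinearMap, ?_, ?_⟩
      · apply ModuleCat.hom_ext
        apply LinearMap.ext
        intro x
        exact e.symm_apply_apply x
      · apply ModuleCat.hom_ext
        apply LinearMap.ext
        intro x
        exact e.apply_symm_apply x
    · have hbot : Xobj k n i = ⊥ := by unfold Xobj; rw [if_neg hi]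
      haveI : Subsingleton ((Xcomplex k n).X i) := by
        show Subsingleton ↥(Xobj k n i); rw [hbot]; infer_instance
      refine ⟨f.f i, ?_, ?_⟩ <;>
        · apply ModuleCat.hom_ext
          apply LinearMap.ext
          intro x
          exact Subsingleton.elim _ _
  exact HomologicalComplex.Hom.isIso_of_components f

lemma Xd_zero_eps (h0 : 0 < n) :
    Xd k n 0 (⟨ε, mem_Xobj_of_lt k n h0 ε⟩ : ↥(Xobj k n 0)) = 0 := by
  by_cases h1 : 0 + 1 < n
  · apply Subtype.ext
    rw [Xd_val k n h1]
    show ε * ε = ((0 : ↥(Xobj k n (0 + 1))) : DualNumber k)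
    rw [eps_mul_eps]
    simp
  · unfold Xd
    rw [dif_neg h1]
    rfl

/-- The identity of `X_n` is not null-homotopic. -/
lemma one_ne_zero_end (h0 : 0 < n) :
    (1 : End ((HomotopyCategory.quotient (ModuleCat (DualNumber k))
      (ComplexShape.up ℕ)).obj (Xcomplex k n))) ≠ 0 := by
  intro h
  set Q := HomotopyCategory.quotient (ModuleCat (DualNumber k)) (ComplexShape.up ℕ)
  have h1 : Q.map (𝟙 (Xcomplex k n)) = Q.map 0 := by
    rw [CategoryTheory.Functor.map_id, Functor.map_zero]
    exact h
  have ht := HomotopyCategory.homotopyOfEq _ _ h1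
  have hc := ht.comm 0
  rw [Homotopy.prevD_zero_cochainComplex, Homotopy.dNext_cochainComplex] at hc
  simp only [HomologicalComplex.zero_f_apply, add_zero] at hc
  have happ : (⟨ε, mem_Xobj_of_lt k n h0 ε⟩ : ↥(Xobj k n 0))
      = ht.hom (0 + 1) 0 ((Xcomplex k n).d 0 (0 + 1)
          (⟨ε, mem_Xobj_of_lt k n h0 ε⟩ : ↥(Xobj k n 0))) :=
    congrArg (fun g : (Xcomplex k n).X 0 ⟶ (Xcomplex k n).X 0 =>
      g (⟨ε, mem_Xobj_of_lt k n h0 ε⟩ : ↥(Xobj k n 0))) hc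
  have hd0 : (Xcomplex k n).d 0 (0 + 1) (⟨ε, mem_Xobj_of_lt k n h0 ε⟩ : ↥(Xobj k n 0))
      = 0 := by
    rw [Xcomplex_d k n 0]
    exact Xd_zero_eps k n h0
  rw [hd0, map_zero] at happ
  have : (ε : DualNumber k) = 0 := congrArg Subtype.val happ
  have h2 := congrArg TrivSqZeroExt.snd this
  simp at h2

/-- In the dual-numbers algebra `A = k[ε]/(ε²)`, for every
`n ≥ 1` the complex `X_n = (A →^ε ⋯ →^ε A)` with `n` terms (differentials given
by multiplication by `ε`) is an indecomposable complex of projective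
`A`-modules: its endomorphism ring in the homotopy category of complexes is
local. -/
theorem stmt_9 (hn : 1 ≤ n) :
    (∀ i : ℕ, Module.Projective (DualNumber k) ((Xcomplex k n).X i)) ∧
    IsLocalRing
      (End ((HomotopyCategory.quotient (ModuleCat (DualNumber k))
        (ComplexShape.up ℕ)).obj (Xcomplex k n))) := by
  have h0 : 0 < n := hn
  constructor
  · intro i
    show Module.Projective (DualNumber k) ↥(Xobj k n i)
    unfold Xobj
    by_cases hi : i < n
    · rw [if_pos hi]
      exact Module.Projective.of_equiv (Submodule.topEquiv (M := DualNumber k)).symm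
    · rw [if_neg hi]
      exact Module.Projective.of_equiv (M := PUnit)
        (Submodule.botEquivPUnit.{0, 0, 0} (R := DualNumber k) (M := DualNumber k)).symm
  · set Q := HomotopyCategory.quotient (ModuleCat (DualNumber k)) (ComplexShape.up ℕ)
      with hQ
    haveI : Nontrivial (End (Q.obj (Xcomplex k n))) := ⟨1, 0, one_ne_zero_end k n h0⟩
    refine ⟨fun {a b} hab => ?_⟩
    obtain ⟨f, hf⟩ := Q.map_surjective a
    by_cases hc : (f.f 0 (oneX k n h0)).val.fst = 0
    · right
      have hb : b = (1 : End (Q.obj (Xcomplex k n))) - a := by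
        rw [← hab]; abel
      have hrep : (1 : End (Q.obj (Xcomplex k n))) - a = Q.map (𝟙 (Xcomplex k n) - f) := by
        rw [Functor.map_sub, CategoryTheory.Functor.map_id, hf]
        rfl
      rw [hb, hrep]
      have hfst : ((HomologicalComplex.Hom.f (𝟙 (Xcomplex k n) - f) 0)
          (oneX k n h0)).val.fst ≠ 0 := by
        rw [HomologicalComplex.sub_f_apply]
        have h6 : ((HomologicalComplex.Hom.f (𝟙 (Xcomplex k n)) 0 - f.f 0)
              (oneX k n h0)).val
            = (oneX k n h0).val - (f.f 0 (oneX k n h0)).val := rfl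
        rw [h6]
        show ((1 : DualNumber k) - (f.f 0 (oneX k n h0)).val).fst ≠ 0
        rw [TrivSqZeroExt.fst_sub, TrivSqZeroExt.fst_one, hc, sub_zero]
        exact one_ne_zero
      haveI := isIso_of_fst_ne k n (𝟙 (Xcomplex k n) - f) h0 hfst
      exact (isUnit_iff_isIso _).2 inferInstance
    · left
      rw [← hf]
      haveI := isIso_of_fst_ne k n f h0 hc
      exact (isUnit_iff_isIso _).2 inferInstance

end
end

section
/- Let Λ, Γ be rings, e ∈ Λ an idempotent with eΛe ≅ Γ, and suppose the functor Hom_Λ(Λe, −) : Λ-Mod → Γ-Mod has an exact left adjoint F and an exact right adjoint. If the unit Id → Hom_Λ(Λe, F(−)) is an isomorphism, then the derived functor of F between bounded derived categories is fully faithful and the derived functor of Hom_Λ(Λe, −) is essentially surjective (a Verdier localization up to its kernel). -/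
open CategoryTheory

open Limits

namespace Stmt19Aux

variable {ι : Type*} {C₁ C₂ : Type*} [Category C₁] [Category C₂]
  [Preadditive C₁] [Preadditive C₂]
  {F : C₁ ⥤ C₂} {G : C₂ ⥤ C₁} [F.Additive] [G.Additive]
  {c : ComplexShape ι}

/-- An adjunction between additive functors induces an adjunction between
the functors on homological complexes. -/
def mapHCAdj (adj : F ⊣ G) (c : ComplexShape ι) :
    F.mapHomologicalComplex c ⊣ G.mapHomologicalComplex c where
  unit :=
    { app := fun X =>
        { f := fun i => adj.unit.app (X.X i)
          comm' := fun i j _ => by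
            exact (adj.unit.naturality (X.d i j)).symm }
      naturality := fun X Y f => by
        ext i
        exact adj.unit.naturality (f.f i) }
  counit :=
    { app := fun Y =>
        { f := fun i => adj.counit.app (Y.X i)
          comm' := fun i j _ => by
            exact (adj.counit.naturality (Y.d i j)).symm }
      naturality := fun X Y f => by
        ext i
        exact adj.counit.naturality (f.f i) }
  left_triangle_components X := by
    ext i
    exact adj.left_triangle_components (X.X i)
  right_triangle_components Y := by
    ext i
    exact adj.right_triangle_components (Y.X i)

lemma isIso_mapHCAdj_unit (adj : F ⊣ G) (c : ComplexShape ι) (h : IsIso adj.unit) :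
    IsIso (mapHCAdj adj c).unit := by
  haveI := h
  haveI : ∀ X, IsIso ((mapHCAdj adj c).unit.app X) := fun X => by
    haveI : ∀ n, IsIso (((mapHCAdj adj c).unit.app X).f n) := fun n => by
      dsimp [mapHCAdj]
      exact NatIso.isIso_app_of_isIso adj.unit _
    exact HomologicalComplex.Hom.isIso_of_components _
  exact NatIso.isIso_of_isIso_app _

lemma isIso_of_isIso_app_obj {D E E' : Type*} [Category D] [Category E] [Category E']
    (L : D ⥤ E) [L.EssSurj] {H H' : E ⥤ E'} (τ : H ⟶ H')
    (h : ∀ X : D, IsIso (τ.app (L.obj X))) : IsIso τ := by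
  have : ∀ Y : E, IsIso (τ.app Y) := by
    intro Y
    have e : L.obj (L.objPreimage Y) ≅ Y := L.objObjPreimageIso Y
    have hn : τ.app Y = H.map e.inv ≫ τ.app (L.obj (L.objPreimage Y)) ≫ H'.map e.hom := by
      rw [← τ.naturality e.hom, ← Category.assoc, ← H.map_comp, e.inv_hom_id, H.map_id,
        Category.id_comp]
    rw [hn]
    have := h (L.objPreimage Y)
    infer_instance
  apply NatIso.isIso_of_isIso_app

end Stmt19Aux


variable (B : Type) [Ring B] (e : B) [he : Fact (IsIdempotentElem e)]

/-- The underlying additive subgroup of the corner ring `eBe`. -/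
def cornerAddSubgroup : AddSubgroup B where
  carrier := {x | e * x * e = x}
  zero_mem' := by simp
  add_mem' := by
    intro x y hx hy
    show e * (x + y) * e = x + y
    rw [mul_add, add_mul, hx, hy]
  neg_mem' := by
    intro x hx
    show e * (-x) * e = -x
    rw [mul_neg, neg_mul, hx]

/-- The corner ring `Γ = eBe` of a ring `B` at an idempotent `e`; its unit is
`e`. -/
def Corner : Type := ↥(cornerAddSubgroup B e)

instance : AddCommGroup (Corner B e) :=
  inferInstanceAs (AddCommGroup ↥(cornerAddSubgroup B e))

namespace Corner

lemma left_absorb {x : B} (hx : e * x * e = x) : e * x = x := by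
  conv_lhs => rw [← hx]
  rw [← mul_assoc, ← mul_assoc, he.out.eq, hx]

lemma right_absorb {x : B} (hx : e * x * e = x) : x * e = x := by
  conv_lhs => rw [← hx]
  rw [mul_assoc, he.out.eq, hx]

lemma mem_mul {x y : B} (hx : e * x * e = x) (hy : e * y * e = y) :
    e * (x * y) * e = x * y := by
  rw [← mul_assoc, left_absorb B e hx, mul_assoc, right_absorb B e hy]

instance : Ring (Corner B e) where
  __ := (inferInstance : AddCommGroup (Corner B e))
  mul x y := ⟨x.1 * y.1, mem_mul B e x.2 y.2⟩
  one := ⟨e, by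
    show e * e * e = e
    rw [he.out.eq, he.out.eq]⟩
  mul_assoc x y z := Subtype.ext (mul_assoc x.1 y.1 z.1)
  one_mul x := Subtype.ext (left_absorb B e x.2)
  mul_one x := Subtype.ext (right_absorb B e x.2)
  left_distrib x y z := Subtype.ext (mul_add x.1 y.1 z.1)
  right_distrib x y z := Subtype.ext (add_mul x.1 y.1 z.1)
  zero_mul x := Subtype.ext (zero_mul x.1)
  mul_zero x := Subtype.ext (mul_zero x.1)

end Corner

/-- For a left `B`-module `M`, the subgroup `eM ⊆ M`. -/
def eSubgroup (M : Type) [AddCommGroup M] [Module B M] : AddSubgroup M where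
  carrier := {m | e • m = m}
  zero_mem' := by simp
  add_mem' := by
    intro x y hx hy
    show e • (x + y) = x + y
    rw [smul_add, hx, hy]
  neg_mem' := by
    intro x hx
    show e • (-x) = -x
    rw [smul_neg, hx]

/-- `eM` is a module over the corner ring `eBe`. -/
instance eSubgroupModule (M : Type) [AddCommGroup M] [Module B M] :
    Module (Corner B e) ↥(eSubgroup B e M) where
  smul c m := ⟨c.1 • m.1, by
    show e • (c.1 • m.1) = c.1 • m.1
    rw [← mul_smul, Corner.left_absorb B e c.2]⟩
  one_smul m := Subtype.ext (by
    show e • m.1 = m.1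
    exact m.2)
  mul_smul c c' m := Subtype.ext (mul_smul c.1 c'.1 m.1)
  smul_add c m m' := Subtype.ext (smul_add c.1 m.1 m'.1)
  smul_zero c := Subtype.ext (smul_zero c.1)
  add_smul c c' m := Subtype.ext (add_smul c.1 c'.1 m.1)
  zero_smul m := Subtype.ext (zero_smul B m.1)

@[simp] lemma Corner.smul_coe (M : Type) [AddCommGroup M] [Module B M]
    (c : Corner B e) (m : ↥(eSubgroup B e M)) :
    ((c • m : ↥(eSubgroup B e M)) : M) = c.1 • m.1 := rfl

/-- The functor `G = Hom_B(Be, −) ≅ e·(−) : B-Mod → (eBe)-Mod`. -/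
def cornerFunctor : ModuleCat B ⥤ ModuleCat (Corner B e) where
  obj M := ModuleCat.of (Corner B e) ↥(eSubgroup B e M)
  map {M N} f :=
    ModuleCat.ofHom
    { toFun := fun m => ⟨f.hom m.1, by
        show e • f.hom m.1 = f.hom m.1
        rw [← map_smul, m.2]⟩
      map_add' := fun m m' => Subtype.ext (by
        show f.hom (m.1 + m'.1) = f.hom m.1 + f.hom m'.1
        rw [map_add])
      map_smul' := fun c m => Subtype.ext (by
        show f.hom (c.1 • m.1) = c.1 • f.hom m.1
        rw [map_smul]) }
  map_id M := by
    apply ModuleCat.hom_ext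
    apply LinearMap.ext
    intro m
    rfl
  map_comp f g := by
    apply ModuleCat.hom_ext
    apply LinearMap.ext
    intro m
    rfl

instance : (cornerFunctor B e).Additive where
  map_add := by
    intros
    apply ModuleCat.hom_ext
    apply LinearMap.ext
    intro m
    rfl

open Limits

/-- **Statement 19.** Let `Λ` be a ring, `e ∈ Λ` an idempotent with corner ring
`Γ = eΛe`, and suppose the functor `G = Hom_Λ(Λe, −) ≅ e·(−) : Λ-Mod → Γ-Mod`
has an exact left adjoint `F` and an exact right adjoint `H`.  If the unit
`Id → G ∘ F` is an isomorphism, then the derived functor of `F` (the functor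
induced on derived categories, intertwining the localizations) is fully
faithful, and the derived functor of `G` is essentially surjective (a Verdier
localization up to its kernel). -/
theorem stmt_19
    [HasDerivedCategory (ModuleCat B)] [HasDerivedCategory (ModuleCat (Corner B e))]
    (F : ModuleCat (Corner B e) ⥤ ModuleCat B) [F.Additive]
    [PreservesFiniteLimits F] [PreservesFiniteColimits F]
    (adj : F ⊣ cornerFunctor B e)
    (Hfun : ModuleCat (Corner B e) ⥤ ModuleCat B) [Hfun.Additive]
    [PreservesFiniteLimits Hfun] [PreservesFiniteColimits Hfun]
    (adj' : cornerFunctor B e ⊣ Hfun)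
    (hunit : IsIso adj.unit) :
    (∃ F' : DerivedCategory (ModuleCat (Corner B e)) ⥤ DerivedCategory (ModuleCat B),
      Nonempty ((F.mapHomologicalComplex (ComplexShape.up ℤ)) ⋙ DerivedCategory.Q ≅
        DerivedCategory.Q ⋙ F') ∧ F'.Full ∧ F'.Faithful) ∧
    (∃ G' : DerivedCategory (ModuleCat B) ⥤ DerivedCategory (ModuleCat (Corner B e)),
      Nonempty (((cornerFunctor B e).mapHomologicalComplex (ComplexShape.up ℤ)) ⋙
        DerivedCategory.Q ≅ DerivedCategory.Q ⋙ G') ∧ G'.EssSurj) := by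
  haveI : PreservesLimitsOfSize.{0, 0} (cornerFunctor B e) := adj.rightAdjoint_preservesLimits
  haveI : PreservesColimitsOfSize.{0, 0} (cornerFunctor B e) := adj'.leftAdjoint_preservesColimits
  haveI : PreservesFiniteLimits (cornerFunctor B e) :=
    PreservesLimitsOfSize.preservesFiniteLimits _
  haveI : PreservesFiniteColimits (cornerFunctor B e) :=
    PreservesColimitsOfSize.preservesFiniteColimits _
  let F' := F.mapDerivedCategory
  let G' := (cornerFunctor B e).mapDerivedCategory
  letI sq1 : CatCommSq (F.mapHomologicalComplex (ComplexShape.up ℤ))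
      DerivedCategory.Q DerivedCategory.Q F' := ⟨F.mapDerivedCategoryFactors.symm⟩
  letI sq2 : CatCommSq ((cornerFunctor B e).mapHomologicalComplex (ComplexShape.up ℤ))
      DerivedCategory.Q DerivedCategory.Q G' :=
    ⟨(cornerFunctor B e).mapDerivedCategoryFactors.symm⟩
  let adjC := Stmt19Aux.mapHCAdj adj (ComplexShape.up ℤ)
  haveI hC : IsIso adjC.unit := Stmt19Aux.isIso_mapHCAdj_unit adj _ hunit
  let dadj := adjC.localization DerivedCategory.Q
    (HomologicalComplex.quasiIso _ _) DerivedCategory.Q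
    (HomologicalComplex.quasiIso _ _) F' G'
  haveI : (DerivedCategory.Q (C := ModuleCat (Corner B e))).EssSurj :=
    Localization.essSurj _ (HomologicalComplex.quasiIso _ _)
  haveI hdu : IsIso dadj.unit := by
    apply Stmt19Aux.isIso_of_isIso_app_obj DerivedCategory.Q
    intro X
    rw [Adjunction.localization_unit_app]
    infer_instance
  exact ⟨⟨F', ⟨F.mapDerivedCategoryFactors.symm⟩,
      (dadj.fullyFaithfulLOfIsIsoUnit).full, (dadj.fullyFaithfulLOfIsIsoUnit).faithful⟩,
    ⟨G', ⟨(cornerFunctor B e).mapDerivedCategoryFactors.symm⟩,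
      ⟨fun Y => ⟨F'.obj Y, ⟨(asIso (dadj.unit.app Y)).symm⟩⟩⟩⟩⟩
end
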